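/- Let G be an alternating labeled graph (k + l = n + 2) with no isolated vertices, on n vertices. Then span⟨G⟩ = 4n; in particular, for any labeled graph G' representing the same Kauffman bracket up to units (i.e., ⟨G'⟩ = (−a)^{3m}⟨G⟩ for some integer m) with n' vertices, one has n' ≥ n. -/

import Mathlib

open Matrix LaurentPolynomial
open scoped Classical

noncomputable section

def adjMatS {V : Type} (G : SimpleGraph V) (s : Finset V) : Matrix s s (ZMod 2) :=
  fun i j => if G.Adj i.1 j.1 then 1 else 0

def corankS {V : Type} (G : SimpleGraph V) (s : Finset V) : ℕ :=
  s.card - (adjMatS G s).rank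

def adjMat {V : Type} [Fintype V] (G : SimpleGraph V) : Matrix V V (ZMod 2) :=
  fun i j => if G.Adj i j then 1 else 0

def corankM {m : Type} [Fintype m] (M : Matrix m m (ZMod 2)) : ℕ :=
  Fintype.card m - M.rank

def alphaCount {V : Type} [Fintype V] (σ : V → Bool) (s : Finset V) : ℕ :=
  (s.filter (fun i => σ i = false)).card + ((sᶜ).filter (fun i => σ i = true)).card

def bracket {V : Type} [Fintype V] (G : SimpleGraph V) (σ : V → Bool) : LaurentPolynomial ℚ :=
  ∑ s : Finset V, T (2 * (alphaCount σ s : ℤ) - (Fintype.card V : ℤ)) *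
    (-T 2 - T (-2)) ^ (corankS G s)

def lspan (p : LaurentPolynomial ℚ) : ℤ := (WithBot.unbotD 0 p.coeff.support.max) - (WithTop.untopD 0 p.coeff.support.min)

def Bmat {V : Type} [Fintype V] (G : SimpleGraph V) (x : V) : Matrix V V (ZMod 2) :=
  adjMat G + 1 + Matrix.single x x 1

def writhe {V : Type} [Fintype V] (G : SimpleGraph V) (σ : V → Bool) : ℤ :=
  ∑ x, (-1 : ℤ) ^ (corankM (Bmat G x)) * (if σ x then 1 else -1)

def extAdj {V : Type} (G : SimpleGraph V) (N : Set V) : V ⊕ Bool → V ⊕ Bool → Prop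
  | .inl i, .inl j => G.Adj i j
  | .inl i, .inr _ => i ∈ N
  | .inr _, .inl j => j ∈ N
  | .inr _, .inr _ => False

def ext2 {V : Type} (G : SimpleGraph V) (N : Set V) : SimpleGraph (V ⊕ Bool) where
  Adj := extAdj G N
  symm := by
    constructor
    rintro (i|b) (j|c) h
    · exact G.adj_symm h
    · exact h
    · exact h
    · exact h
  loopless := by
    constructor
    rintro (i|b) h
    · exact G.irrefl h
    · exact h

def optExt {V : Type} (G : SimpleGraph V) : SimpleGraph (Option V) where
  Adj x y := match x, y with
    | some i, some j => G.Adj i j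
    | _, _ => False
  symm := by
    constructor
    rintro (_|i) (_|j) h
    · exact h
    · exact h
    · exact h
    · exact G.adj_symm h
  loopless := by
    constructor
    rintro (_|i) h
    · exact h
    · exact G.irrefl h

/-!
Write `M` and `P` for the vertices labelled `false` and `true`, so that
`α(s) = |s ∩ M| + |P \ s|`. The state `s` contributes `a^{2α(s) - n} δ^{corank s}` with
`δ = -a² - a⁻²`, which lives in degrees `2α(s) - n ± 2 corank s`; as `corank s ≤ |s|`, all of
them lie in `[-(|M| + 3|P|), 3|M| + |P|]`, a window of width `4n`. The alternating condition says
exactly that `M` and `P` are independent. Then only `s = M` reaches the top of the window: a state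
`s ⊋ M` contains a vertex of `P` and, `P` being independent, a neighbour of it in `M`, so its
corank drops below `|s|`. Flipping all labels inverts the bracket, so likewise only `s = P`
reaches the bottom. Both extreme coefficients are therefore `±1` and the span is `4n`. A unit
multiple of ⟨G⟩ has the same span, which is at most `4n'` for a graph on `n'` vertices.
-/

namespace LaurentPolynomial

section Semiring

variable {R : Type*} [Semiring R]

lemma coeff_T_mul (n : ℤ) (p : R[T;T⁻¹]) (k : ℤ) : (T n * p).coeff k = p.coeff (k - n) := by
  rw [T, AddMonoidAlgebra.coeff_single_mul_apply, one_mul, neg_add_eq_sub]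

lemma coeff_C_mul (a : R) (p : R[T;T⁻¹]) (k : ℤ) : (C a * p).coeff k = a * p.coeff k := by
  rw [← single_eq_C, AddMonoidAlgebra.coeff_single_zero_mul]

lemma coeff_C_mul_T_mul (a : R) (n : ℤ) (p : R[T;T⁻¹]) (k : ℤ) :
    (C a * T n * p).coeff k = a * p.coeff (k - n) := by
  rw [mul_assoc, coeff_C_mul, coeff_T_mul]

end Semiring

section Ring

variable {R : Type*} [Ring R]

lemma coeff_loop_pow_succ (c : ℕ) (k : ℤ) :
    ((-T 2 - T (-2) : R[T;T⁻¹]) ^ (c + 1)).coeff k =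
      -((-T 2 - T (-2) : R[T;T⁻¹]) ^ c).coeff (k - 2) -
        ((-T 2 - T (-2) : R[T;T⁻¹]) ^ c).coeff (k + 2) := by
  rw [pow_succ', sub_mul, neg_mul, AddMonoidAlgebra.coeff_sub, AddMonoidAlgebra.coeff_neg,
    Finsupp.sub_apply, Finsupp.neg_apply, coeff_T_mul, coeff_T_mul, sub_neg_eq_add]

lemma bounds_of_coeff_loop_pow_ne_zero {c : ℕ} {k : ℤ}
    (h : ((-T 2 - T (-2) : R[T;T⁻¹]) ^ c).coeff k ≠ 0) :
    -(2 * c : ℤ) ≤ k ∧ k ≤ 2 * c := by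
  induction c generalizing k with
  | zero =>
    have : k = 0 := by
      by_contra hk
      simp [pow_zero, ← T_zero, T_apply, Ne.symm hk] at h
    simp [this]
  | succ c ih =>
    rw [coeff_loop_pow_succ] at h
    by_cases hlo : ((-T 2 - T (-2) : R[T;T⁻¹]) ^ c).coeff (k - 2) = 0
    · rw [hlo, neg_zero, zero_sub, neg_ne_zero] at h
      have := ih h
      push_cast; omega
    · have := ih hlo
      push_cast; omega

lemma coeff_loop_pow_two_mul (c : ℕ) :
    ((-T 2 - T (-2) : R[T;T⁻¹]) ^ c).coeff (2 * c) = (-1) ^ c := by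
  induction c with
  | zero => simp [← T_zero]
  | succ c ih =>
    have hout : ((-T 2 - T (-2) : R[T;T⁻¹]) ^ c).coeff (2 * (c + 1 : ℕ) + 2) = 0 := by
      by_contra h
      have := (bounds_of_coeff_loop_pow_ne_zero h).2
      omega
    rw [coeff_loop_pow_succ, hout, show (2 * (c + 1 : ℕ) - 2 : ℤ) = 2 * c by push_cast; ring,
      ih, pow_succ]
    simp

end Ring

end LaurentPolynomial

lemma le_lspan {p : ℚ[T;T⁻¹]} {a b : ℤ} (ha : p.coeff a ≠ 0) (hb : p.coeff b ≠ 0) :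
    b - a ≤ lspan p := by
  have ha' : a ∈ p.coeff.support := Finsupp.mem_support_iff.mpr ha
  have hb' : b ∈ p.coeff.support := Finsupp.mem_support_iff.mpr hb
  have hne : p.coeff.support.Nonempty := ⟨a, ha'⟩
  rw [lspan, ← Finset.coe_max' hne, ← Finset.coe_min' hne, WithBot.unbotD_coe,
    WithTop.untopD_coe]
  linarith [Finset.le_max' _ b hb', Finset.min'_le _ a ha']

lemma lspan_le {p : ℚ[T;T⁻¹]} {lo hi : ℤ} (hle : lo ≤ hi)
    (h : ∀ k, p.coeff k ≠ 0 → lo ≤ k ∧ k ≤ hi) : lspan p ≤ hi - lo := by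
  rcases p.coeff.support.eq_empty_or_nonempty with hemp | hne
  · simp [lspan, hemp, hle]
  · have hbound : ∀ k ∈ p.coeff.support, lo ≤ k ∧ k ≤ hi :=
      fun k hk => h k (Finsupp.mem_support_iff.mp hk)
    rw [lspan, ← Finset.coe_max' hne, ← Finset.coe_min' hne, WithBot.unbotD_coe,
      WithTop.untopD_coe]
    linarith [(hbound _ (Finset.max'_mem _ hne)).2, (hbound _ (Finset.min'_mem _ hne)).1]

section Labels

variable {V : Type} [Fintype V]

def negVerts (σ : V → Bool) : Finset V := Finset.univ.filter fun i => σ i = false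

def posVerts (σ : V → Bool) : Finset V := Finset.univ.filter fun i => σ i = true

variable (σ : V → Bool) (s : Finset V)

lemma negVerts_not : negVerts (fun i => !σ i) = posVerts σ := by
  ext i; simp [negVerts, posVerts]

lemma posVerts_not : posVerts (fun i => !σ i) = negVerts σ := by
  ext i; simp [negVerts, posVerts]

lemma disjoint_negVerts_posVerts : Disjoint (negVerts σ) (posVerts σ) :=
  Finset.disjoint_filter.mpr fun i _ h => by simp [h]

lemma card_negVerts_add_card_posVerts :
    (negVerts σ).card + (posVerts σ).card = Fintype.card V := by
  rw [← Finset.card_union_of_disjoint (disjoint_negVerts_posVerts σ), ← Finset.card_univ]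
  congr; ext i; cases h : σ i <;> simp [negVerts, posVerts, h]

lemma card_inter_negVerts_add_card_inter_posVerts :
    (s ∩ negVerts σ).card + (s ∩ posVerts σ).card = s.card := by
  rw [← Finset.card_union_of_disjoint]
  · congr; ext i; cases h : σ i <;> simp [negVerts, posVerts, h]
  · exact Finset.disjoint_left.mpr fun i hi hi' => by
      simp_all [negVerts, posVerts]

lemma alphaCount_eq : alphaCount σ s = (s ∩ negVerts σ).card + (posVerts σ \ s).card := by
  rw [alphaCount]
  congr 2 <;> ext i <;> simp [negVerts, posVerts, and_comm]

lemma alphaCount_add_alphaCount_not :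
    alphaCount σ s + alphaCount (fun i => !σ i) s = Fintype.card V := by
  rw [alphaCount_eq, alphaCount_eq, negVerts_not, posVerts_not,
    ← card_negVerts_add_card_posVerts σ, ← Finset.card_sdiff_add_card_inter (negVerts σ) s,
    ← Finset.card_sdiff_add_card_inter (posVerts σ) s, Finset.inter_comm (negVerts σ),
    Finset.inter_comm (posVerts σ)]
  ring

end Labels

lemma Matrix.rank_eq_zero_iff {n : Type*} [Fintype n] {K : Type*} [Field K] (A : Matrix n n K) :
    A.rank = 0 ↔ A = 0 := by
  refine ⟨fun h => ?_, fun h => h ▸ Matrix.rank_zero⟩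
  rw [Matrix.rank_eq_finrank_span_cols, Submodule.finrank_eq_zero, Submodule.span_eq_bot] at h
  ext i j
  simpa using congrFun (h _ ⟨j, rfl⟩) i

section Corank

variable {V : Type} (G : SimpleGraph V) (s : Finset V)

lemma corankS_le_card : corankS G s ≤ s.card := Nat.sub_le _ _

lemma adjMatS_eq_zero_iff : adjMatS G s = 0 ↔ G.IsIndepSet (s : Set V) := by
  constructor
  · intro h i hi j hj _ hadj
    have := congrFun (congrFun h ⟨i, hi⟩) ⟨j, hj⟩
    simp [adjMatS, hadj] at this
  · intro h
    ext i j
    by_cases hij : i = j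
    · simp [adjMatS, hij]
    · simp [adjMatS, h i.2 j.2 (Subtype.coe_ne_coe.mpr hij)]

lemma corankS_eq_card_iff : corankS G s = s.card ↔ G.IsIndepSet (s : Set V) := by
  have hle : (adjMatS G s).rank ≤ s.card := by
    simpa using Matrix.rank_le_card_width (adjMatS G s)
  rw [← adjMatS_eq_zero_iff, ← Matrix.rank_eq_zero_iff, corankS]
  omega

end Corank

section Window

variable {V : Type} [Fintype V] (G : SimpleGraph V) (σ : V → Bool)

def stateTopDegree (s : Finset V) : ℤ :=
  2 * (alphaCount σ s : ℤ) - Fintype.card V + 2 * corankS G s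

lemma stateTopDegree_add_defect (s : Finset V) :
    stateTopDegree G σ s + 4 * (((negVerts σ).card : ℤ) - (s ∩ negVerts σ).card) +
        2 * ((s.card : ℤ) - corankS G s) =
      3 * (negVerts σ).card + (posVerts σ).card := by
  have hα := alphaCount_eq σ s
  have hs := card_inter_negVerts_add_card_inter_posVerts σ s
  have hn := card_negVerts_add_card_posVerts σ
  have hP := Finset.card_sdiff_add_card_inter (posVerts σ) s
  rw [Finset.inter_comm] at hP
  rw [stateTopDegree]
  omega

lemma stateTopDegree_le (s : Finset V) :
    stateTopDegree G σ s ≤ 3 * (negVerts σ).card + (posVerts σ).card := by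
  have := stateTopDegree_add_defect G σ s
  have := corankS_le_card G s
  have := Finset.card_le_card (Finset.inter_subset_right : s ∩ negVerts σ ⊆ negVerts σ)
  omega

lemma corankS_lt_card_of_negVerts_ssubset (hP : G.IsIndepSet (posVerts σ : Set V))
    (hiso : ∀ x, ∃ y, G.Adj x y) {s : Finset V} (hs : negVerts σ ⊂ s) :
    corankS G s < s.card := by
  obtain ⟨x, hxs, hxM⟩ := Finset.exists_of_ssubset hs
  obtain ⟨y, hxy⟩ := hiso x
  have hxP : x ∈ posVerts σ := by simpa [negVerts, posVerts] using hxM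
  have hyM : y ∈ negVerts σ := by
    by_contra hyM
    have hyP : y ∈ posVerts σ := by simpa [negVerts, posVerts] using hyM
    exact hP hxP hyP hxy.ne hxy
  have hdep : ¬ G.IsIndepSet (s : Set V) := fun h => h hxs (hs.subset hyM) hxy.ne hxy
  exact lt_of_le_of_ne (corankS_le_card G s) (mt (corankS_eq_card_iff G s).mp hdep)

lemma stateTopDegree_lt (hP : G.IsIndepSet (posVerts σ : Set V)) (hiso : ∀ x, ∃ y, G.Adj x y)
    {s : Finset V} (hs : s ≠ negVerts σ) :
    stateTopDegree G σ s < 3 * (negVerts σ).card + (posVerts σ).card := by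
  have hdefect : (s ∩ negVerts σ).card < (negVerts σ).card ∨ corankS G s < s.card := by
    by_cases hsub : negVerts σ ⊆ s
    · exact .inr (corankS_lt_card_of_negVerts_ssubset G σ hP hiso
        (hsub.ssubset_of_ne (Ne.symm hs)))
    · exact .inl (Finset.card_lt_card ⟨Finset.inter_subset_right,
        fun h => hsub (h.trans Finset.inter_subset_left)⟩)
  have := stateTopDegree_add_defect G σ s
  have := corankS_le_card G s
  have := Finset.card_le_card (Finset.inter_subset_right : s ∩ negVerts σ ⊆ negVerts σ)
  omega

end Window

section Coefficients

variable {V : Type} [Fintype V] (G : SimpleGraph V) (σ : V → Bool)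

lemma bracket_eq_invert_bracket_not : bracket G σ = invert (bracket G fun i => !σ i) := by
  have hloop : invert (-T 2 - T (-2) : ℚ[T;T⁻¹]) = -T 2 - T (-2) := by simp; ring
  simp only [bracket, map_sum, map_mul, map_pow, hloop, invert_T]
  refine Finset.sum_congr rfl fun s _ => ?_
  congr 2
  have := alphaCount_add_alphaCount_not σ s
  omega

lemma coeff_bracket (k : ℤ) :
    (bracket G σ).coeff k = ∑ s, ((-T 2 - T (-2) : ℚ[T;T⁻¹]) ^ corankS G s).coeff
      (k - (2 * alphaCount σ s - Fintype.card V)) := by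
  rw [bracket, AddMonoidAlgebra.coeff_sum, Finsupp.finsetSum_apply]
  exact Finset.sum_congr rfl fun s _ => coeff_T_mul _ _ _

lemma coeff_bracket_summand_eq_zero {s : Finset V} {k : ℤ} (hk : stateTopDegree G σ s < k) :
    ((-T 2 - T (-2) : ℚ[T;T⁻¹]) ^ corankS G s).coeff
      (k - (2 * alphaCount σ s - Fintype.card V)) = 0 := by
  by_contra h
  have := (bounds_of_coeff_loop_pow_ne_zero h).2
  rw [stateTopDegree] at hk
  omega

lemma coeff_bracket_eq_zero_of_gt {k : ℤ} (hk : 3 * (negVerts σ).card + (posVerts σ).card < k) :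
    (bracket G σ).coeff k = 0 := by
  rw [coeff_bracket]
  exact Finset.sum_eq_zero fun s _ =>
    coeff_bracket_summand_eq_zero G σ ((stateTopDegree_le G σ s).trans_lt hk)

lemma coeff_bracket_top (hM : G.IsIndepSet (negVerts σ : Set V))
    (hP : G.IsIndepSet (posVerts σ : Set V)) (hiso : ∀ x, ∃ y, G.Adj x y) :
    (bracket G σ).coeff (3 * (negVerts σ).card + (posVerts σ).card) =
      (-1) ^ (negVerts σ).card := by
  rw [coeff_bracket, Finset.sum_eq_single (negVerts σ)]
  · have hc : corankS G (negVerts σ) = (negVerts σ).card := (corankS_eq_card_iff G _).mpr hM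
    have hα : alphaCount σ (negVerts σ) = Fintype.card V := by
      rw [alphaCount_eq, Finset.inter_self,
        Finset.sdiff_eq_self_of_disjoint (disjoint_negVerts_posVerts σ).symm,
        card_negVerts_add_card_posVerts]
    have hn := card_negVerts_add_card_posVerts σ
    rw [hc, hα, show 3 * ((negVerts σ).card : ℤ) + (posVerts σ).card -
      (2 * (Fintype.card V : ℕ) - Fintype.card V) = 2 * (negVerts σ).card by omega,
      coeff_loop_pow_two_mul]
  · exact fun s _ hs => coeff_bracket_summand_eq_zero G σ (stateTopDegree_lt G σ hP hiso hs)
  · exact fun h => absurd (Finset.mem_univ _) h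

lemma coeff_bracket_eq_zero_of_lt {k : ℤ}
    (hk : k < -((negVerts σ).card + 3 * (posVerts σ).card)) :
    (bracket G σ).coeff k = 0 := by
  rw [bracket_eq_invert_bracket_not, invert_apply]
  exact coeff_bracket_eq_zero_of_gt G _ (by rw [negVerts_not, posVerts_not]; omega)

lemma coeff_bracket_bot (hM : G.IsIndepSet (negVerts σ : Set V))
    (hP : G.IsIndepSet (posVerts σ : Set V)) (hiso : ∀ x, ∃ y, G.Adj x y) :
    (bracket G σ).coeff (-((negVerts σ).card + 3 * (posVerts σ).card)) =
      (-1) ^ (posVerts σ).card := by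
  have htop := coeff_bracket_top G (fun i => !σ i) (by rwa [negVerts_not])
    (by rwa [posVerts_not]) hiso
  rw [negVerts_not, posVerts_not] at htop
  rw [bracket_eq_invert_bracket_not, invert_apply, neg_neg, ← htop, add_comm]

lemma lspan_bracket_le : lspan (bracket G σ) ≤ 4 * Fintype.card V := by
  have hn := card_negVerts_add_card_posVerts σ
  calc lspan (bracket G σ)
      ≤ (3 * (negVerts σ).card + (posVerts σ).card) -
          -((negVerts σ).card + 3 * (posVerts σ).card) :=
        lspan_le (by omega) fun k hk =>
          ⟨not_lt.mp fun h => hk (coeff_bracket_eq_zero_of_lt G σ h),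
            not_lt.mp fun h => hk (coeff_bracket_eq_zero_of_gt G σ h)⟩
    _ = 4 * Fintype.card V := by omega

end Coefficients

/-- An alternating labeled graph without isolated vertices has span⟨G⟩ = 4n and
is minimal: any labeled graph whose bracket agrees with ⟨G⟩ up to a unit
(-a)^{3m} has at least n vertices. -/
theorem alternating_minimal {V : Type} [Fintype V] (G : SimpleGraph V)
    (σ : V → Bool)
    (halt : corankS G (Finset.univ.filter (fun i => σ i = false)) +
      corankS G (Finset.univ.filter (fun i => σ i = true)) = Fintype.card V)
    (hiso : ∀ x : V, ∃ y : V, G.Adj x y) :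
    lspan (bracket G σ) = 4 * (Fintype.card V : ℤ) ∧
    ∀ (n' : ℕ) (G' : SimpleGraph (Fin n')) (σ' : Fin n' → Bool) (m : ℤ),
      bracket G' σ' = C ((-1 : ℚ) ^ m) * T (3 * m) * bracket G σ →
      Fintype.card V ≤ n' := by
  change corankS G (negVerts σ) + corankS G (posVerts σ) = _ at halt
  have hn := card_negVerts_add_card_posVerts σ
  have hcM := corankS_le_card G (negVerts σ)
  have hcP := corankS_le_card G (posVerts σ)
  have hM : G.IsIndepSet (negVerts σ : Set V) := (corankS_eq_card_iff G _).mp (by omega)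
  have hP : G.IsIndepSet (posVerts σ : Set V) := (corankS_eq_card_iff G _).mp (by omega)
  have htop := coeff_bracket_top G σ hM hP hiso
  have hbot := coeff_bracket_bot G σ hM hP hiso
  have hsign : ∀ c : ℕ, (-1 : ℚ) ^ c ≠ 0 := fun c => pow_ne_zero c (by norm_num)
  have hspan := le_lspan (hbot ▸ hsign _) (htop ▸ hsign _)
  refine ⟨le_antisymm (lspan_bracket_le G σ) (by omega), fun n' G' σ' m hb => ?_⟩
  have hshift : ∀ k, (bracket G' σ').coeff (k + 3 * m) = (-1) ^ m * (bracket G σ).coeff k := by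
    intro k
    rw [hb, coeff_C_mul_T_mul, add_sub_cancel_right]
  have hunit : (-1 : ℚ) ^ m ≠ 0 := zpow_ne_zero m (by norm_num)
  have hspan' := le_lspan (p := bracket G' σ')
    (by rw [hshift, hbot]; exact mul_ne_zero hunit (hsign _))
    (by rw [hshift, htop]; exact mul_ne_zero hunit (hsign _))
  have hbound := lspan_bracket_le G' σ'
  rw [Fintype.card_fin] at hbound
  omega
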